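/- Let G be a group of order 2 (e.g. G = Multiplicative (ZMod 2)) and let ℤ_sign be the G-representation on the abelian group ℤ where the nontrivial element of G acts by negation. Then the third group cohomology H³(G, ℤ_sign) is isomorphic to ℤ/2ℤ. -/

import Mathlib

/-!
A group of order 2 is cyclic, generated by its non-identity element `σ`, so its cohomology in
odd degrees is `ker N / im (σ - 1)`, computed from the periodic resolution
`… → ℤ[G] --N--> ℤ[G] --(σ - 1)--> ℤ[G]`. On the sign representation the norm `N = 1 + σ`
vanishes and `σ - 1` is multiplication by `-2`, so every odd cohomology group is `ℤ/2`.
-/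

open CategoryTheory

namespace Rep.FiniteCyclicGroup

universe u

variable {k G : Type u} [CommRing k] [CommGroup G] [Fintype G] (A : Rep k G) {g : G}
  (hg : ∀ x, x ∈ Subgroup.zpowers g)

theorem groupCohomologyπOdd_surjective {i : ℕ} (hi : Odd i) :
    Function.Surjective (groupCohomologyπOdd A g hg i hi) :=
  (ModuleCat.epi_iff_surjective _).1 <|
    epi_comp' (@IsIso.epi_of_iso _ _ _ _ _ (Iso.isIso_inv _)) (epi_comp _ _)

noncomputable def groupCohomologyOddEquivOfNormEqZero (hN : A.norm = 0) {i : ℕ} (hi : Odd i) :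
    groupCohomology A i ≃ₗ[k] A ⧸ LinearMap.range (applyAsHom A g - 𝟙 A).hom.toLinearMap := by
  let toCycles : A →ₗ[k] LinearMap.ker A.norm.hom.toLinearMap :=
    LinearMap.codRestrict _ LinearMap.id fun x => by simp [hN]
  let φ := (groupCohomologyπOdd A g hg i hi).hom ∘ₗ toCycles
  have hφ : Function.Surjective φ :=
    (groupCohomologyπOdd_surjective A hg hi).comp fun (x : LinearMap.ker _) => ⟨x.1, rfl⟩
  have hker : LinearMap.ker φ = LinearMap.range (applyAsHom A g - 𝟙 A).hom.toLinearMap := by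
    ext x
    exact groupCohomologyπOdd_eq_zero_iff A g hg i hi (toCycles x)
  exact ((Submodule.quotEquivOfEq _ _ hker).symm.trans (φ.quotKerEquivOfSurjective hφ)).symm

end Rep.FiniteCyclicGroup

theorem Representation.norm_eq_zero_of_card_eq_two {k G V : Type*} [CommRing k] [Group G]
    [Fintype G] [AddCommGroup V] [Module k V] (hG : Nat.card G = 2) {σ : G} (hσ : σ ≠ 1)
    {ρ : Representation k G V} (hρ : ∀ g : G, g ≠ 1 → ∀ v : V, ρ g v = -v) :
    ρ.norm = 0 := by
  ext
  rw [Representation.norm, Fintype.sum_eq_add 1 σ hσ.symm]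
  · simp [hρ σ hσ]
  · rintro x ⟨hx1, hxσ⟩
    exact absurd ((Nat.card_eq_two_iff' 1).1 hG |>.unique hx1 hσ) hxσ

section SignRepresentation

variable {G : Type} {σ : G}

theorem range_applyAsHom_sub_id_eq_span_two [CommGroup G] (hσ : σ ≠ 1)
    {ρ : Representation ℤ G ℤ} (hρ : ∀ g : G, g ≠ 1 → ∀ m : ℤ, ρ g m = -m) :
    LinearMap.range ((Rep.of ρ).applyAsHom σ - 𝟙 _).hom.toLinearMap =
      (Ideal.span {2} : Ideal ℤ) := by
  have hf (y : ℤ) : ((Rep.of ρ).applyAsHom σ - 𝟙 _).hom.toLinearMap y = 2 * -y := by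
    change ρ σ y - y = _
    rw [hρ σ hσ]
    ring
  ext m
  simp only [LinearMap.mem_range, hf, Ideal.mem_span_singleton]
  exact ⟨fun ⟨y, hy⟩ => ⟨-y, hy.symm⟩, fun ⟨y, hy⟩ => ⟨-y, by rw [hy, neg_neg]⟩⟩

noncomputable def groupCohomologyOddEquivZModTwo [CommGroup G] [Fintype G]
    (hG : Nat.card G = 2) (hσ : σ ≠ 1) {ρ : Representation ℤ G ℤ}
    (hρ : ∀ g : G, g ≠ 1 → ∀ m : ℤ, ρ g m = -m) {i : ℕ} (hi : Odd i) :
    groupCohomology (Rep.of ρ) i ≃ₗ[ℤ] ZMod 2 :=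
  have : Fact (Nat.Prime 2) := ⟨Nat.prime_two⟩
  have hN : (Rep.of ρ).norm = 0 := Rep.hom_ext <| by
    ext
    exact LinearMap.congr_fun (Representation.norm_eq_zero_of_card_eq_two hG hσ hρ) 1
  (Rep.FiniteCyclicGroup.groupCohomologyOddEquivOfNormEqZero (Rep.of ρ)
      (fun _ => mem_zpowers_of_prime_card hG hσ) hN hi).trans <|
    (Submodule.quotEquivOfEq _ _ (range_applyAsHom_sub_id_eq_span_two hσ hρ)).trans
      (Int.quotientSpanNatEquivZMod 2).toIntLinearEquiv

end SignRepresentation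

/-- For a group `G` of order 2, the third group cohomology of `G` with coefficients in the
sign representation `ℤ₋` (where the nontrivial element acts by negation) is `ℤ/2ℤ`. -/
theorem stmt_13 (G : Type) [Group G] (hG : Nat.card G = 2)
    (ρ : Representation ℤ G ℤ)
    (hρ : ∀ g : G, g ≠ 1 → ∀ m : ℤ, ρ g m = -m) :
    Nonempty ((groupCohomology (Rep.of ρ) 3) ≃+ ZMod 2) := by
  have : Fact (Nat.Prime 2) := ⟨Nat.prime_two⟩
  have : IsCyclic G := isCyclic_of_prime_card hG
  let : CommGroup G := IsCyclic.commGroup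
  have : Finite G := Nat.finite_of_card_ne_zero (by omega)
  have : Fintype G := Fintype.ofFinite G
  obtain ⟨σ, hσ, -⟩ := (Nat.card_eq_two_iff' (1 : G)).1 hG
  exact ⟨(groupCohomologyOddEquivZModTwo hG hσ hρ (by decide)).toAddEquiv⟩
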